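/- arXiv:2103.06090 — 4 statements merged into one kernel-verified Lean document; each statement's English description precedes it below -/
import Mathlib

section
/- Let g be the 4-dimensional filiform Lie algebra with brackets [X1,X2]=X3, [X1,X3]=X4, and let J_t be the linear map given in the basis (X1,X2,X3,X4) by the matrix with upper-left 2×2 block [[1, -2 csch t],[sinh t, -1]] and lower-right 2×2 block [[-1-√2, -2(2+√2) csch t],[sinh t, 1+√2]]. Then the Nijenhuis tensor N_t(X,Y) = [X,Y] + J_t[J_tX,Y] + J_t[X,J_tY] - [J_tX,J_tY] satisfies N_t(X1,X3) = (4+4√2) csch(t) · X3. -/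
open Real

/-- The bracket on ℝ⁴ with [X1,X2]=X3, [X1,X3]=X4. -/
def filiform4Bracket (x y : Fin 4 → ℝ) : Fin 4 → ℝ :=
  ![0, 0, x 0 * y 1 - x 1 * y 0, x 0 * y 2 - x 2 * y 0]

/-- The matrix J_t of the 4-dimensional filiform example. -/
noncomputable def J4 (t : ℝ) : Matrix (Fin 4) (Fin 4) ℝ :=
  !![1, -2 / Real.sinh t, 0, 0;
     Real.sinh t, -1, 0, 0;
     0, 0, -1 - Real.sqrt 2, -2 * (2 + Real.sqrt 2) / Real.sinh t;
     0, 0, Real.sinh t, 1 + Real.sqrt 2]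

/-- The Nijenhuis tensor of J_t. -/
noncomputable def N4 (t : ℝ) (x y : Fin 4 → ℝ) : Fin 4 → ℝ :=
  filiform4Bracket x y
    + (J4 t).mulVec (filiform4Bracket ((J4 t).mulVec x) y)
    + (J4 t).mulVec (filiform4Bracket x ((J4 t).mulVec y))
    - filiform4Bracket ((J4 t).mulVec x) ((J4 t).mulVec y)

/-- N_t(X1,X3) = (4+4√2)·csch(t)·X3. -/
theorem N4_X1_X3 (t : ℝ) (ht : Real.sinh t ≠ 0) :
    N4 t (Pi.single 0 1) (Pi.single 2 1) =
      ((4 + 4 * Real.sqrt 2) / Real.sinh t) • (Pi.single 2 1 : Fin 4 → ℝ) := by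
  have hs2 : Real.sqrt 2 * Real.sqrt 2 = 2 :=
    Real.mul_self_sqrt (by norm_num)
  funext i
  simp only [N4, J4, filiform4Bracket, Matrix.mulVec, dotProduct,
    Fin.sum_univ_four, Matrix.cons_val', Matrix.cons_val_zero, Matrix.cons_val_one,
    Matrix.head_cons, Matrix.empty_val', Matrix.cons_val_fin_one, Matrix.head_fin_const,
    Matrix.of_apply]
  fin_cases i <;>
    (try simp [Pi.single_apply, Matrix.vecHead, Matrix.vecTail, Function.comp]) <;>
    (try field_simp) <;> nlinarith [hs2, sq_nonneg (Real.sinh t)]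
end

section
/- With g and J_t as above (4-dimensional filiform Lie algebra, sinh t ≠ 0), the Nijenhuis tensor satisfies N_t(X1,X2) = 0 and N_t(X3,X4) = 0. -/
open Real

/-- N_t(X1,X2) = 0 and N_t(X3,X4) = 0. -/
theorem N4_X1_X2_and_X3_X4 (t : ℝ) (ht : Real.sinh t ≠ 0) :
    N4 t (Pi.single 0 1) (Pi.single 1 1) = 0 ∧
    N4 t (Pi.single 2 1) (Pi.single 3 1) = 0 := by
  constructor <;>
  · funext i
    fin_cases i <;>
    · simp [N4, J4, filiform4Bracket, Matrix.mulVec, dotProduct,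
        Fin.sum_univ_four, Pi.single_apply]
      try field_simp
      try ring_nf
end

section
/- With g and J_t the 4-dimensional filiform example, for every pair of basis vectors X_i, X_j, each coefficient of N_t(X_i,X_j) in the basis X1,...,X4 tends to 0 as t → ∞. Consequently, the operator norm of the Nijenhuis tensor N_t tends to zero as t → ∞. -/
open Real

open Filter

lemma fin_succ_two : Fin.succ (2 : Fin 3) = 3 := rfl
lemma fin_succ_zero3 : Fin.succ (0 : Fin 3) = 1 := rfl
lemma fin_succ_one3 : Fin.succ (1 : Fin 3) = 2 := rfl
lemma fin_ss2 : Fin.succ (Fin.succ (0 : Fin 2)) = (2 : Fin 4) := rfl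
lemma fin_sss3 : Fin.succ (Fin.succ (Fin.succ (0 : Fin 1))) = (3 : Fin 4) := rfl

lemma N4_apply_zero (t : ℝ) (x y : Fin 4 → ℝ) : N4 t x y 0 = 0 := by
  simp only [N4, J4, filiform4Bracket, Pi.add_apply, Pi.sub_apply,
    Matrix.cons_mulVec, Matrix.cons_dotProduct, Matrix.dotProduct_of_isEmpty,
    Matrix.empty_mulVec, Matrix.vecHead, Matrix.vecTail, Function.comp_apply,
    Matrix.cons_val_zero, Matrix.cons_val_one, Matrix.cons_val_two,
    Matrix.cons_val_three, Matrix.cons_val_fin_one, Matrix.cons_val_succ, add_zero, fin_succ_two, fin_succ_zero3, fin_succ_one3, fin_ss2, fin_sss3]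
  ring

lemma N4_apply_one (t : ℝ) (x y : Fin 4 → ℝ) : N4 t x y 1 = 0 := by
  simp only [N4, J4, filiform4Bracket, Pi.add_apply, Pi.sub_apply,
    Matrix.cons_mulVec, Matrix.cons_dotProduct, Matrix.dotProduct_of_isEmpty,
    Matrix.empty_mulVec, Matrix.vecHead, Matrix.vecTail, Function.comp_apply,
    Matrix.cons_val_zero, Matrix.cons_val_one, Matrix.cons_val_two,
    Matrix.cons_val_three, Matrix.cons_val_fin_one, Matrix.cons_val_succ, add_zero, fin_succ_two, fin_succ_zero3, fin_succ_one3, fin_ss2, fin_sss3]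
  ring

lemma N4_apply_two (t : ℝ) (ht : Real.sinh t ≠ 0) (x y : Fin 4 → ℝ) :
    N4 t x y 2 = (4 + 4 * Real.sqrt 2) / Real.sinh t * (x 0 * y 2 - x 2 * y 0)
        + (24 + 16 * Real.sqrt 2) / (Real.sinh t) ^ 2 * (x 0 * y 3 - x 3 * y 0)
        + (8 + 4 * Real.sqrt 2) / (Real.sinh t) ^ 2 * (x 1 * y 2 - x 2 * y 1) := by
  have h2 : Real.sqrt 2 ^ 2 = 2 := Real.sq_sqrt (by norm_num)
  simp only [N4, J4, filiform4Bracket, Pi.add_apply, Pi.sub_apply,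
    Matrix.cons_mulVec, Matrix.cons_dotProduct, Matrix.dotProduct_of_isEmpty,
    Matrix.empty_mulVec, Matrix.vecHead, Matrix.vecTail, Function.comp_apply,
    Matrix.cons_val_zero, Matrix.cons_val_one, Matrix.cons_val_two,
    Matrix.cons_val_three, Matrix.cons_val_fin_one, Matrix.cons_val_succ, add_zero, fin_succ_two, fin_succ_zero3, fin_succ_one3, fin_ss2, fin_sss3]
  field_simp
  ring_nf
  simp only [h2]
  ring_nf

lemma N4_apply_three (t : ℝ) (ht : Real.sinh t ≠ 0) (x y : Fin 4 → ℝ) :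
    N4 t x y 3 = -((4 + 4 * Real.sqrt 2) / Real.sinh t) * (x 0 * y 3 - x 3 * y 0)
        - (4 + 4 * Real.sqrt 2) / Real.sinh t * (x 1 * y 2 - x 2 * y 1)
        - (8 + 4 * Real.sqrt 2) / (Real.sinh t) ^ 2 * (x 1 * y 3 - x 3 * y 1) := by
  have h2 : Real.sqrt 2 ^ 2 = 2 := Real.sq_sqrt (by norm_num)
  simp only [N4, J4, filiform4Bracket, Pi.add_apply, Pi.sub_apply,
    Matrix.cons_mulVec, Matrix.cons_dotProduct, Matrix.dotProduct_of_isEmpty,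
    Matrix.empty_mulVec, Matrix.vecHead, Matrix.vecTail, Function.comp_apply,
    Matrix.cons_val_zero, Matrix.cons_val_one, Matrix.cons_val_two,
    Matrix.cons_val_three, Matrix.cons_val_fin_one, Matrix.cons_val_succ, add_zero, fin_succ_two, fin_succ_zero3, fin_succ_one3, fin_ss2, fin_sss3]
  field_simp
  ring_nf
  simp only [h2]
  ring_nf

lemma abs_comb_le {a b c d : ℝ} (ha : |a| ≤ 1) (hb : |b| ≤ 1) (hc : |c| ≤ 1)
    (hd : |d| ≤ 1) : |a * b - c * d| ≤ 2 := by
  have := abs_sub (a * b) (c * d)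
  rw [abs_mul, abs_mul] at this
  nlinarith [abs_nonneg a, abs_nonneg b, abs_nonneg c, abs_nonneg d]

/-- Master bound: when sinh t ≥ 1 and the sup norms of x, y are at most 1,
every component of N4 is bounded by 144 / sinh t. -/
lemma N4_bound (t : ℝ) (ht : 1 ≤ Real.sinh t) (x y : Fin 4 → ℝ)
    (hx : ∀ i, |x i| ≤ 1) (hy : ∀ i, |y i| ≤ 1) (k : Fin 4) :
    |N4 t x y k| ≤ 144 / Real.sinh t := by
  set s := Real.sinh t with hs
  have hs0 : (0 : ℝ) < s := lt_of_lt_of_le one_pos ht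
  have hsne : s ≠ 0 := ne_of_gt hs0
  have hr0 : (0 : ℝ) ≤ Real.sqrt 2 := Real.sqrt_nonneg 2
  have hr2 : Real.sqrt 2 ^ 2 = 2 := Real.sq_sqrt (by norm_num)
  have hr15 : Real.sqrt 2 ≤ 3 / 2 := by nlinarith
  have hpos : (0 : ℝ) ≤ 144 / s := by positivity
  have hss : 1 / s ^ 2 ≤ 1 / s := by
    apply one_div_le_one_div_of_le hs0
    nlinarith
  have hA : s ≤ s ^ 2 := by nlinarith
  have key : ∀ u v w : ℝ, |u| ≤ 2 → |v| ≤ 2 → |w| ≤ 2 →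
      |(4 + 4 * Real.sqrt 2) / s * u + (24 + 16 * Real.sqrt 2) / s ^ 2 * v
        + (8 + 4 * Real.sqrt 2) / s ^ 2 * w| ≤ 144 / s := by
    intro u v w hu hv hw
    have c1 : |(4 + 4 * Real.sqrt 2) / s| = (4 + 4 * Real.sqrt 2) / s := by
      rw [abs_of_nonneg]; positivity
    have c2 : |(24 + 16 * Real.sqrt 2) / s ^ 2| = (24 + 16 * Real.sqrt 2) / s ^ 2 := by
      rw [abs_of_nonneg]; positivity
    have c3 : |(8 + 4 * Real.sqrt 2) / s ^ 2| = (8 + 4 * Real.sqrt 2) / s ^ 2 := by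
      rw [abs_of_nonneg]; positivity
    calc |(4 + 4 * Real.sqrt 2) / s * u + (24 + 16 * Real.sqrt 2) / s ^ 2 * v
            + (8 + 4 * Real.sqrt 2) / s ^ 2 * w|
        ≤ |(4 + 4 * Real.sqrt 2) / s * u| + |(24 + 16 * Real.sqrt 2) / s ^ 2 * v|
            + |(8 + 4 * Real.sqrt 2) / s ^ 2 * w| := abs_add_three _ _ _
      _ = |(4 + 4 * Real.sqrt 2) / s| * |u| + |(24 + 16 * Real.sqrt 2) / s ^ 2| * |v|
            + |(8 + 4 * Real.sqrt 2) / s ^ 2| * |w| := by rw [abs_mul, abs_mul, abs_mul]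
      _ ≤ |(4 + 4 * Real.sqrt 2) / s| * 2 + |(24 + 16 * Real.sqrt 2) / s ^ 2| * 2
            + |(8 + 4 * Real.sqrt 2) / s ^ 2| * 2 := by gcongr <;> positivity
      _ = ((8 + 8 * Real.sqrt 2) * s + (64 + 40 * Real.sqrt 2)) / s ^ 2 := by
          rw [c1, c2, c3]; field_simp; ring
      _ ≤ 144 / s := by
          rw [div_le_div_iff₀ (by positivity) hs0]
          have hB : (0 : ℝ) ≤ 64 + 40 * Real.sqrt 2 := by positivity
          have h72 : (0 : ℝ) ≤ 72 - 48 * Real.sqrt 2 := by nlinarith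
          nlinarith [mul_le_mul_of_nonneg_left hA hB, mul_nonneg h72 (sq_nonneg s)]
  have key2 : ∀ u v w : ℝ, |u| ≤ 2 → |v| ≤ 2 → |w| ≤ 2 →
      |(4 + 4 * Real.sqrt 2) / s * u + (4 + 4 * Real.sqrt 2) / s * v
        + (8 + 4 * Real.sqrt 2) / s ^ 2 * w| ≤ 144 / s := by
    intro u v w hu hv hw
    have c1 : |(4 + 4 * Real.sqrt 2) / s| = (4 + 4 * Real.sqrt 2) / s := by
      rw [abs_of_nonneg]; positivity
    have c3 : |(8 + 4 * Real.sqrt 2) / s ^ 2| = (8 + 4 * Real.sqrt 2) / s ^ 2 := by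
      rw [abs_of_nonneg]; positivity
    calc |(4 + 4 * Real.sqrt 2) / s * u + (4 + 4 * Real.sqrt 2) / s * v
            + (8 + 4 * Real.sqrt 2) / s ^ 2 * w|
        ≤ |(4 + 4 * Real.sqrt 2) / s * u| + |(4 + 4 * Real.sqrt 2) / s * v|
            + |(8 + 4 * Real.sqrt 2) / s ^ 2 * w| := abs_add_three _ _ _
      _ = |(4 + 4 * Real.sqrt 2) / s| * |u| + |(4 + 4 * Real.sqrt 2) / s| * |v|
            + |(8 + 4 * Real.sqrt 2) / s ^ 2| * |w| := by rw [abs_mul, abs_mul, abs_mul]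
      _ ≤ |(4 + 4 * Real.sqrt 2) / s| * 2 + |(4 + 4 * Real.sqrt 2) / s| * 2
            + |(8 + 4 * Real.sqrt 2) / s ^ 2| * 2 := by gcongr <;> positivity
      _ = ((16 + 16 * Real.sqrt 2) * s + (16 + 8 * Real.sqrt 2)) / s ^ 2 := by
          rw [c1, c3]; field_simp; ring
      _ ≤ 144 / s := by
          rw [div_le_div_iff₀ (by positivity) hs0]
          have hB : (0 : ℝ) ≤ 16 + 8 * Real.sqrt 2 := by positivity
          have h72 : (0 : ℝ) ≤ 112 - 24 * Real.sqrt 2 := by nlinarith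
          nlinarith [mul_le_mul_of_nonneg_left hA hB, mul_nonneg h72 (sq_nonneg s)]
  fin_cases k
  · rw [show (⟨0, by norm_num⟩ : Fin 4) = 0 from rfl, N4_apply_zero]
    simpa using hpos
  · rw [show (⟨1, by norm_num⟩ : Fin 4) = 1 from rfl, N4_apply_one]
    simpa using hpos
  · rw [show (⟨2, by norm_num⟩ : Fin 4) = 2 from rfl, N4_apply_two t hsne]
    exact key _ _ _ (abs_comb_le (hx 0) (hy 2) (hx 2) (hy 0))
      (abs_comb_le (hx 0) (hy 3) (hx 3) (hy 0))
      (abs_comb_le (hx 1) (hy 2) (hx 2) (hy 1))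
  · rw [show (⟨3, by norm_num⟩ : Fin 4) = 3 from rfl, N4_apply_three t hsne,
      show -((4 + 4 * Real.sqrt 2) / s) * (x 0 * y 3 - x 3 * y 0)
          - (4 + 4 * Real.sqrt 2) / s * (x 1 * y 2 - x 2 * y 1)
          - (8 + 4 * Real.sqrt 2) / s ^ 2 * (x 1 * y 3 - x 3 * y 1)
        = (4 + 4 * Real.sqrt 2) / s * (x 3 * y 0 - x 0 * y 3)
          + (4 + 4 * Real.sqrt 2) / s * (x 2 * y 1 - x 1 * y 2)
          + (8 + 4 * Real.sqrt 2) / s ^ 2 * (x 3 * y 1 - x 1 * y 3) from by ring]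
    exact key2 _ _ _ (abs_comb_le (hx 3) (hy 0) (hx 0) (hy 3))
      (abs_comb_le (hx 2) (hy 1) (hx 1) (hy 2))
      (abs_comb_le (hx 3) (hy 1) (hx 1) (hy 3))

lemma sinh_tendsto_atTop : Tendsto Real.sinh atTop atTop :=
  tendsto_atTop_atTop_of_monotone (fun _ _ h => Real.sinh_le_sinh.mpr h)
    (fun b => ⟨Real.arsinh b, (Real.sinh_arsinh b).ge⟩)

/-- Each basis coefficient of N_t tends to 0 as t → ∞, and consequently the
operator (sup) norm of the Nijenhuis tensor tends to 0 as t → ∞. -/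
theorem N4_tendsto_zero :
    (∀ i j k : Fin 4,
      Tendsto (fun t : ℝ => N4 t (Pi.single i 1) (Pi.single j 1) k) atTop (nhds 0)) ∧
    (∀ ε > (0 : ℝ), ∃ T : ℝ, ∀ t ≥ T, ∀ x y : Fin 4 → ℝ,
      ‖x‖ ≤ 1 → ‖y‖ ≤ 1 → ‖N4 t x y‖ ≤ ε) := by
  have hsingle : ∀ (i l : Fin 4), |(Pi.single i 1 : Fin 4 → ℝ) l| ≤ 1 := by
    intro i l
    rw [Pi.single_apply]
    split <;> simp
  have hlim : Tendsto (fun t : ℝ => 144 / Real.sinh t) atTop (nhds 0) :=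
    Tendsto.div_atTop tendsto_const_nhds sinh_tendsto_atTop
  constructor
  · intro i j k
    apply squeeze_zero_norm'
    · filter_upwards [eventually_ge_atTop (Real.arsinh 1)] with t ht
      have h1 : (1 : ℝ) ≤ Real.sinh t := by
        calc (1 : ℝ) = Real.sinh (Real.arsinh 1) := (Real.sinh_arsinh 1).symm
          _ ≤ Real.sinh t := Real.sinh_le_sinh.mpr ht
      exact N4_bound t h1 _ _ (hsingle i) (hsingle j) k
    · exact hlim
  · intro ε hε
    refine ⟨Real.arsinh (max 1 (144 / ε)), fun t ht x y hx hy => ?_⟩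
    have h1 : max 1 (144 / ε) ≤ Real.sinh t := by
      calc max 1 (144 / ε) = Real.sinh (Real.arsinh (max 1 (144 / ε))) :=
            (Real.sinh_arsinh _).symm
        _ ≤ Real.sinh t := Real.sinh_le_sinh.mpr ht
    have hs1 : (1 : ℝ) ≤ Real.sinh t := le_trans (le_max_left _ _) h1
    have hs0 : (0 : ℝ) < Real.sinh t := lt_of_lt_of_le one_pos hs1
    have hfin : 144 / Real.sinh t ≤ ε := by
      rw [div_le_iff₀ hs0]
      have h2 : 144 / ε ≤ Real.sinh t := le_trans (le_max_right _ _) h1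
      calc (144 : ℝ) = ε * (144 / ε) := by field_simp
        _ ≤ ε * Real.sinh t := by
            exact mul_le_mul_of_nonneg_left h2 hε.le
    have hx' : ∀ i, |x i| ≤ 1 := fun i =>
      le_trans (norm_le_pi_norm x i) hx
    have hy' : ∀ i, |y i| ≤ 1 := fun i =>
      le_trans (norm_le_pi_norm y i) hy
    rw [show ‖N4 t x y‖ = ‖N4 t x y‖ from rfl]
    apply le_trans (?_ : ‖N4 t x y‖ ≤ 144 / Real.sinh t) hfin
    apply pi_norm_le_iff_of_nonneg (by positivity) |>.mpr
    intro k
    exact N4_bound t hs1 x y hx' hy' k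
end

section
/- On the 6-dimensional filiform Lie algebra, the 2-form ω = x1∧x6 + x2∧x5 - x3∧x4 (where xi is dual to Xi) is closed with respect to the Chevalley–Eilenberg differential and nondegenerate (ω∧ω∧ω ≠ 0). -/
/-- The bracket on ℝ⁶ with [X1,Xi]=X_{i+1} for i=2,3,4,5. -/
def filiform6Bracket (x y : Fin 6 → ℝ) : Fin 6 → ℝ :=
  ![0, 0, x 0 * y 1 - x 1 * y 0, x 0 * y 2 - x 2 * y 0,
    x 0 * y 3 - x 3 * y 0, x 0 * y 4 - x 4 * y 0]

/-- The 2-form ω = x1∧x6 + x2∧x5 - x3∧x4. -/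
def omega6 (x y : Fin 6 → ℝ) : ℝ :=
  (x 0 * y 5 - x 5 * y 0) + (x 1 * y 4 - x 4 * y 1) - (x 2 * y 3 - x 3 * y 2)

/-- Integer analogue of `omega6` on basis vectors. -/
def omInt (i j : Fin 6) : ℤ :=
  (if i = 0 ∧ j = 5 then 1 else 0) - (if i = 5 ∧ j = 0 then 1 else 0)
  + (if i = 1 ∧ j = 4 then 1 else 0) - (if i = 4 ∧ j = 1 then 1 else 0)
  - (if i = 2 ∧ j = 3 then 1 else 0) + (if i = 3 ∧ j = 2 then 1 else 0)

/-- Integer summand of the 6-form. -/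
def Fsum (σ : Equiv.Perm (Fin 6)) : ℤ :=
  (Equiv.Perm.sign σ : ℤ) * omInt (σ 0) (σ 1) * omInt (σ 2) (σ 3) * omInt (σ 4) (σ 5)

lemma omega6_single (i j : Fin 6) :
    omega6 (Pi.single i 1) (Pi.single j 1) = (omInt i j : ℝ) := by
  fin_cases i <;> fin_cases j <;>
    simp [omega6, omInt, Pi.single_apply]

set_option maxRecDepth 1000000 in
lemma chunk0 : (∑ e : Equiv.Perm (Fin 5), Fsum (Equiv.Perm.decomposeFin.symm (0, e))) = -8 := by
  decide

set_option maxRecDepth 1000000 in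
lemma chunk1 : (∑ e : Equiv.Perm (Fin 5), Fsum (Equiv.Perm.decomposeFin.symm (1, e))) = -8 := by
  decide

set_option maxRecDepth 1000000 in
lemma chunk2 : (∑ e : Equiv.Perm (Fin 5), Fsum (Equiv.Perm.decomposeFin.symm (2, e))) = -8 := by
  decide

set_option maxRecDepth 1000000 in
lemma chunk3 : (∑ e : Equiv.Perm (Fin 5), Fsum (Equiv.Perm.decomposeFin.symm (3, e))) = -8 := by
  decide

set_option maxRecDepth 1000000 in
lemma chunk4 : (∑ e : Equiv.Perm (Fin 5), Fsum (Equiv.Perm.decomposeFin.symm (4, e))) = -8 := by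
  decide

set_option maxRecDepth 1000000 in
lemma chunk5 : (∑ e : Equiv.Perm (Fin 5), Fsum (Equiv.Perm.decomposeFin.symm (5, e))) = -8 := by
  decide

lemma Fsum_total : (∑ σ : Equiv.Perm (Fin 6), Fsum σ) = -48 := by
  rw [← Equiv.sum_comp (Equiv.Perm.decomposeFin.symm) Fsum, Fintype.sum_prod_type,
    Fin.sum_univ_six, chunk0, chunk1, chunk2, chunk3, chunk4, chunk5]
  norm_num

/-- ω is closed with respect to the Chevalley–Eilenberg differential and
nondegenerate: ω∧ω∧ω is a nonzero 6-form (evaluated on the basis). -/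
theorem filiform6_omega_closed_nondeg :
    (∀ x y z : Fin 6 → ℝ,
      -omega6 (filiform6Bracket x y) z + omega6 (filiform6Bracket x z) y
        - omega6 (filiform6Bracket y z) x = 0) ∧
    (∑ σ : Equiv.Perm (Fin 6), ((Equiv.Perm.sign σ : ℤ) : ℝ) *
        omega6 (Pi.single (σ 0) 1) (Pi.single (σ 1) 1) *
        omega6 (Pi.single (σ 2) 1) (Pi.single (σ 3) 1) *
        omega6 (Pi.single (σ 4) 1) (Pi.single (σ 5) 1)) ≠ 0 := by
  constructor
  · intro x y z
    have hv : ∀ a b c d : ℝ, ∀ i : Fin 6,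
        (![0, 0, a, b, c, d] : Fin 6 → ℝ) = ![0, 0, a, b, c, d] := fun _ _ _ _ _ => rfl
    show -(((filiform6Bracket x y) 0 * z 5 - (filiform6Bracket x y) 5 * z 0) +
        ((filiform6Bracket x y) 1 * z 4 - (filiform6Bracket x y) 4 * z 1) -
        ((filiform6Bracket x y) 2 * z 3 - (filiform6Bracket x y) 3 * z 2)) + _ - _ = 0
    simp only [filiform6Bracket, omega6, Matrix.cons_val_zero, Matrix.cons_val_one,
      Matrix.head_cons, show ∀ a b c d : ℝ, (![0, 0, a, b, c, d] : Fin 6 → ℝ) 2 = a from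
        fun _ _ _ _ => rfl, show ∀ a b c d : ℝ, (![0, 0, a, b, c, d] : Fin 6 → ℝ) 3 = b from
        fun _ _ _ _ => rfl, show ∀ a b c d : ℝ, (![0, 0, a, b, c, d] : Fin 6 → ℝ) 4 = c from
        fun _ _ _ _ => rfl, show ∀ a b c d : ℝ, (![0, 0, a, b, c, d] : Fin 6 → ℝ) 5 = d from
        fun _ _ _ _ => rfl]
    ring
  · have key : (∑ σ : Equiv.Perm (Fin 6), ((Equiv.Perm.sign σ : ℤ) : ℝ) *
        omega6 (Pi.single (σ 0) 1) (Pi.single (σ 1) 1) *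
        omega6 (Pi.single (σ 2) 1) (Pi.single (σ 3) 1) *
        omega6 (Pi.single (σ 4) 1) (Pi.single (σ 5) 1)) =
        ((∑ σ : Equiv.Perm (Fin 6), Fsum σ : ℤ) : ℝ) := by
      push_cast
      refine Finset.sum_congr rfl fun σ _ => ?_
      rw [omega6_single, omega6_single, omega6_single]
      simp only [Fsum]
      push_cast
      ring
    rw [key, Fsum_total]
    norm_num
end
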